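/- arXiv:2604.21451 — 3 statements merged into one kernel-verified Lean document; each statement's English description precedes it below -/
import Mathlib

section
/- Let K and K' be proper convex cones in ℝⁿ. Then the interiors of K and K' are disjoint if and only if K° ∩ (−K'°) ≠ {0}, where K° denotes the polar cone {y : x·y ≤ 0 for all x ∈ K}. -/
open Set
open scoped RealInnerProductSpace
private lemma subset_closure_interior_aux {E : Type*} [NormedAddCommGroup E]
    [NormedSpace ℝ E] {s : Set E} (hs : Convex ℝ s) (h : (interior s).Nonempty) :
    s ⊆ closure (interior s) := by
  obtain ⟨x₀, hx₀⟩ := h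
  intro x hx
  have hseq : ∀ m : ℕ, (1 / (m + 1) : ℝ) • x₀ + (1 - 1 / (m + 1) : ℝ) • x ∈ interior s := by
    intro m
    have h1 : (0:ℝ) < 1 / (m + 1) := by positivity
    have h2 : (1 / (m + 1) : ℝ) ≤ 1 := by
      rw [div_le_one (by positivity)]; linarith [Nat.cast_nonneg (α := ℝ) m]
    exact hs.combo_interior_closure_mem_interior hx₀ (subset_closure hx) h1
      (by linarith) (by ring)
  have h0 : Filter.Tendsto (fun m : ℕ => (1 / (m + 1) : ℝ)) Filter.atTop (nhds 0) :=
    tendsto_one_div_add_atTop_nhds_zero_nat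
  have htend : Filter.Tendsto
      (fun m : ℕ => (1 / (m + 1) : ℝ) • x₀ + (1 - 1 / (m + 1) : ℝ) • x)
      Filter.atTop (nhds x) := by
    have := ((h0.smul_const x₀).add (((tendsto_const_nhds (x := (1:ℝ))).sub h0).smul_const x))
    simpa using this
  exact mem_closure_of_tendsto htend (Filter.Eventually.of_forall hseq)


/-- For proper convex cones `K`, `K'` in ℝⁿ, the interiors of `K` and `K'`
are disjoint iff `K° ∩ (−K'°) ≠ {0}`, where `K°` is the polar cone. -/
theorem polar_intersection_characterization (n : ℕ)
    (K K' : Set (EuclideanSpace ℝ (Fin n)))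
    (hKne : K.Nonempty) (hK'ne : K'.Nonempty)
    (hKcone : ∀ x ∈ K, ∀ y ∈ K, ∀ a b : ℝ, 0 ≤ a → 0 ≤ b → a • x + b • y ∈ K)
    (hK'cone : ∀ x ∈ K', ∀ y ∈ K', ∀ a b : ℝ, 0 ≤ a → 0 ≤ b → a • x + b • y ∈ K')
    (hKclosed : IsClosed K) (hK'closed : IsClosed K')
    (hKint : (interior K).Nonempty) (hK'int : (interior K').Nonempty)
    (hKline : ∀ x, x ∈ K → -x ∈ K → x = 0)
    (hK'line : ∀ x, x ∈ K' → -x ∈ K' → x = 0) :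
    interior K ∩ interior K' = ∅ ↔
      ({y | ∀ x ∈ K, ⟪x, y⟫ ≤ 0} ∩ -{y | ∀ x ∈ K', ⟪x, y⟫ ≤ 0}) ≠ {0} := by
  have hKconv : Convex ℝ K := by
    intro x hx y hy a b ha hb _
    exact hKcone x hx y hy a b ha hb
  have hK'conv : Convex ℝ K' := by
    intro x hx y hy a b ha hb _
    exact hK'cone x hx y hy a b ha hb
  have hK0 : (0 : EuclideanSpace ℝ (Fin n)) ∈ K := by
    obtain ⟨x, hx⟩ := hKne
    simpa using hKcone x hx x hx 0 0 le_rfl le_rfl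
  have hK'0 : (0 : EuclideanSpace ℝ (Fin n)) ∈ K' := by
    obtain ⟨x, hx⟩ := hK'ne
    simpa using hK'cone x hx x hx 0 0 le_rfl le_rfl
  have h0mem : (0 : EuclideanSpace ℝ (Fin n)) ∈
      ({y | ∀ x ∈ K, ⟪x, y⟫ ≤ 0} ∩ -{y | ∀ x ∈ K', ⟪x, y⟫ ≤ 0}) := by
    constructor
    · intro x _; simp
    · rw [Set.mem_neg]; intro x _; simp
  constructor
  · -- disjoint interiors → nontrivial polar intersection
    intro hdisj
    have hdisj' : Disjoint (interior K) K' := by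
      have h1 : Disjoint (interior K) (interior K') := Set.disjoint_iff_inter_eq_empty.2 hdisj
      have h2 := h1.closure_right isOpen_interior
      exact h2.mono_right (subset_closure_interior_aux hK'conv hK'int)
    obtain ⟨f, c, hfK, hfK'⟩ :=
      geometric_hahn_banach_open (hKconv.interior) isOpen_interior hK'conv hdisj'
    have hc0 : c ≤ 0 := by simpa using hfK' 0 hK'0
    -- f ≥ 0 on K'
    have hfK'0 : ∀ x ∈ K', 0 ≤ f x := by
      intro x hx
      by_contra hneg
      push_neg at hneg
      have ht0 : (0:ℝ) ≤ (c - 1) / f x := by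
        rw [← neg_div_neg_eq]
        exact div_nonneg (by linarith) (by linarith)
      have hmem : ((c - 1) / f x) • x ∈ K' := by
        have := hK'cone x hx x hx ((c - 1) / f x) 0 ht0 le_rfl
        simpa using this
      have h2 := hfK' _ hmem
      rw [map_smul, smul_eq_mul, div_mul_cancel₀ _ (ne_of_lt hneg)] at h2
      linarith
    -- f ≤ 0 on K
    have hfK0 : ∀ x ∈ K, f x ≤ 0 := by
      intro x hx
      have hsub : K ⊆ {z : EuclideanSpace ℝ (Fin n) | f z ≤ 0} := by
        have h1 : interior K ⊆ {z : EuclideanSpace ℝ (Fin n) | f z ≤ 0} :=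
          fun z hz => le_of_lt (lt_of_lt_of_le (hfK z hz) hc0)
        calc K ⊆ closure (interior K) := subset_closure_interior_aux hKconv hKint
          _ ⊆ closure {z : EuclideanSpace ℝ (Fin n) | f z ≤ 0} := closure_mono h1
          _ = {z : EuclideanSpace ℝ (Fin n) | f z ≤ 0} :=
              IsClosed.closure_eq (isClosed_le f.continuous continuous_const)
      exact hsub hx
    set y : EuclideanSpace ℝ (Fin n) :=
      (InnerProductSpace.toDual ℝ (EuclideanSpace ℝ (Fin n))).symm f with hy
    have hyx : ∀ x : EuclideanSpace ℝ (Fin n), ⟪y, x⟫ = f x :=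
      fun x => InnerProductSpace.toDual_symm_apply
    obtain ⟨x₀, hx₀⟩ := hKint
    have hyne : y ≠ 0 := by
      intro h0
      have h1 : f x₀ < c := hfK x₀ hx₀
      have h2 : (0:ℝ) = f x₀ := by rw [← hyx x₀, h0]; simp
      linarith
    intro heq
    have hymem : y ∈ ({y | ∀ x ∈ K, ⟪x, y⟫ ≤ 0} ∩ -{y | ∀ x ∈ K', ⟪x, y⟫ ≤ 0}) := by
      constructor
      · intro x hx
        rw [real_inner_comm, hyx]
        exact hfK0 x hx
      · rw [Set.mem_neg]
        intro x hx
        have hxy : ⟪x, y⟫ = f x := by rw [real_inner_comm, hyx]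
        rw [inner_neg_right, hxy]
        linarith [hfK'0 x hx]
    rw [heq] at hymem
    exact hyne hymem
  · -- nontrivial polar intersection → disjoint interiors
    intro hne
    by_contra hint
    have hint' : (interior K ∩ interior K').Nonempty := by
      rcases Set.eq_empty_or_nonempty (interior K ∩ interior K') with h | h
      · exact absurd h hint
      · exact h
    obtain ⟨z, hzK, hzK'⟩ := hint'
    have hex : ∃ y ∈ ({y | ∀ x ∈ K, ⟪x, y⟫ ≤ 0} ∩ -{y | ∀ x ∈ K', ⟪x, y⟫ ≤ 0}), y ≠ 0 := by
      by_contra hall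
      push_neg at hall
      exact hne (Set.eq_singleton_iff_unique_mem.2 ⟨h0mem, fun y hy => hall y hy⟩)
    obtain ⟨y, ⟨hy1, hy2⟩, hyne⟩ := hex
    rw [Set.mem_neg] at hy2
    have hz1 : ⟪z, y⟫ ≤ 0 := hy1 z (interior_subset hzK)
    have hz2 : 0 ≤ ⟪z, y⟫ := by
      have := hy2 z (interior_subset hzK')
      rw [inner_neg_right] at this
      linarith
    obtain ⟨ε, hε, hball⟩ := Metric.isOpen_iff.1 isOpen_interior z hzK
    have hyn : (0:ℝ) < ‖y‖ := norm_pos_iff.2 hyne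
    set t : ℝ := ε / (2 * ‖y‖) with ht
    have htpos : 0 < t := by positivity
    have hmem : z + t • y ∈ K := by
      apply interior_subset
      apply hball
      rw [Metric.mem_ball, dist_eq_norm]
      have hz : z + t • y - z = t • y := by abel
      rw [hz, norm_smul, Real.norm_eq_abs, abs_of_pos htpos, ht]
      rw [div_mul_eq_mul_div, mul_comm, mul_div_assoc]
      calc ‖y‖ * (ε / (2 * ‖y‖)) = ε / 2 := by field_simp
        _ < ε := by linarith
    have hfin := hy1 _ hmem
    rw [inner_add_left, real_inner_smul_left, real_inner_self_eq_norm_sq] at hfin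
    nlinarith [mul_pos htpos (pow_pos hyn 2)]
end

section
/- The polynomial p(u, v) = −2uv³ + 2v³ − 2uv² − 6v² + 2uv + 2v + 2u + 2 is nonnegative for all u ∈ [−1/2, 1] and v ∈ [0, 1]. -/
/-- p(u, v) = −2uv³ + 2v³ − 2uv² − 6v² + 2uv + 2v + 2u + 2 is
nonnegative for u ∈ [−1/2, 1] and v ∈ [0, 1]. -/
theorem poly_nonneg (u v : ℝ) (hu : u ∈ Set.Icc (-(1:ℝ)/2) 1) (hv : v ∈ Set.Icc (0:ℝ) 1) :
    0 ≤ -2*u*v^3 + 2*v^3 - 2*u*v^2 - 6*v^2 + 2*u*v + 2*v + 2*u + 2 := by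
  obtain ⟨hu1, hu2⟩ := hu
  obtain ⟨hv1, hv2⟩ := hv
  nlinarith [mul_nonneg (mul_nonneg (sq_nonneg (v-1)) (by linarith : (0:ℝ) ≤ 3*v+1)) (by linarith : (0:ℝ) ≤ 1),
    mul_nonneg (mul_nonneg (sq_nonneg (v+1)) (by linarith : (0:ℝ) ≤ 1-v)) (by linarith : (0:ℝ) ≤ u + 1/2)]
end

section
/- Let N ≥ 3 be an integer and ϱ ∈ (0, π/2). Let α = 2π/N, let μ² = 2 + 2cos α − 2 cos α cos²ϱ + 2cos²ϱ, and let τ = arccos(2cos ϱ / μ) (the inradius of the regular spherical N-gon of angular radius ϱ). Then 2τ ≥ ϱ. -/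
open Real

/-- for N ≥ 3 and ϱ ∈ (0, π/2), the inradius
τ = arccos(2 cos ϱ / μ) of the standard regular spherical N-gon of angular
radius ϱ, where μ² = 2 + 2cos α − 2cos α cos²ϱ + 2cos²ϱ and α = 2π/N,
satisfies 2τ ≥ ϱ. -/
theorem two_inradius_ge_circumradius (N : ℕ) (hN : 3 ≤ N) (ϱ : ℝ)
    (hϱ : ϱ ∈ Set.Ioo 0 (π / 2)) :
    ϱ ≤ 2 * arccos (2 * cos ϱ /
      sqrt (2 + 2 * cos (2*π/N) - 2 * cos (2*π/N) * cos ϱ ^ 2 + 2 * cos ϱ ^ 2)) := by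
  obtain ⟨hϱ0, hϱ2⟩ := hϱ
  have hπ := Real.pi_pos
  set c := cos ϱ with hc
  set a := cos (2*π/N) with ha
  have hc0 : 0 < c := Real.cos_pos_of_mem_Ioo ⟨by linarith, hϱ2⟩
  have hc1 : c < 1 := by
    have h := Real.cos_lt_cos_of_nonneg_of_le_pi le_rfl (by linarith) hϱ0
    simpa [hc] using h
  -- a ≥ -1/2
  have hNpos : (0:ℝ) < N := by positivity
  have hN3 : (3:ℝ) ≤ N := by exact_mod_cast hN
  have hαle : 2*π/N ≤ 2*π/3 := by
    apply div_le_div_of_nonneg_left (by positivity) (by norm_num) hN3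
  have hα0 : 0 ≤ 2*π/N := by positivity
  have h23 : cos (2*π/3) = -(1/2) := by
    have : (2*π/3 : ℝ) = π - π/3 := by ring
    rw [this, Real.cos_pi_sub, Real.cos_pi_div_three]
  have ha' : -(1/2) ≤ a := by
    rw [← h23, ha]
    exact Real.cos_le_cos_of_nonneg_of_le_pi hα0 (by linarith) hαle
  have ha1 : a ≤ 1 := Real.cos_le_one _
  -- μ² positive
  set M := 2 + 2 * a - 2 * a * c ^ 2 + 2 * c ^ 2 with hM
  have hMpos : 0 < M := by nlinarith [sq_nonneg c]
  have hμ : 0 < sqrt M := Real.sqrt_pos.mpr hMpos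
  have hμsq : sqrt M ^ 2 = M := Real.sq_sqrt hMpos.le
  -- key inequality: 8 c² ≤ M (1 + c)
  have hkey : 8 * c ^ 2 ≤ M * (1 + c) := by
    nlinarith [mul_nonneg (mul_nonneg (sq_nonneg (c - 1)) (by linarith : (0:ℝ) ≤ 3*c+1)) (by norm_num : (0:ℝ) ≤ 1),
      mul_nonneg (by nlinarith : (0:ℝ) ≤ 1 - c^2) (by linarith : (0:ℝ) ≤ a + 1/2)]
  -- cos (ϱ/2)
  have hcoshalf : cos (ϱ/2) = sqrt ((1 + c) / 2) :=
    Real.cos_half (by linarith) (by linarith)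
  have hch_pos : 0 < cos (ϱ/2) := Real.cos_pos_of_mem_Ioo ⟨by linarith, by linarith⟩
  -- 2c/μ ≤ cos(ϱ/2)
  have hle : 2 * c / sqrt M ≤ cos (ϱ/2) := by
    rw [div_le_iff₀ hμ]
    have hsq : (2*c)^2 ≤ (cos (ϱ/2) * sqrt M)^2 := by
      rw [mul_pow, mul_pow, hμsq, hcoshalf, Real.sq_sqrt (by linarith : (0:ℝ) ≤ (1+c)/2)]
      nlinarith
    nlinarith [mul_pos hch_pos hμ, mul_pos hc0 (by norm_num : (0:ℝ) < 2)]
  have hle1 : 2 * c / sqrt M ≤ 1 := le_trans hle (Real.cos_le_one _)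
  have hge : ϱ/2 ≤ arccos (2 * c / sqrt M) := by
    have h1 : arccos (cos (ϱ/2)) ≤ arccos (2 * c / sqrt M) := by
      unfold Real.arccos
      have := Real.monotone_arcsin hle
      linarith
    rwa [Real.arccos_cos (by linarith) (by linarith)] at h1
  linarith
end
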